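/- In the n-door Monty Hall game where the host opens n−2 doors, the conditional winning probabilities satisfy P(W|C)=P(E^c) and P(W|C^c)=P(E). -/

import Mathlib

open MeasureTheory ProbabilityTheory ENNReal

/-! The contestant's decision `C` to switch is independent of the event `E` that the first pick is
the car, since `P(C | E) = P(C | Eᶜ)`. Moreover, up to null sets, `W ∩ C = Eᶜ ∩ C` and
`W ∩ Cᶜ = E ∩ Cᶜ`, so `P(W | C) = P(Eᶜ | C) = P(Eᶜ)` and `P(W | Cᶜ) = P(E | Cᶜ) = P(E)`. -/

section

variable {Ω : Type*} [MeasurableSpace Ω] {μ : Measure Ω} {s t w : Set Ω}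

lemma measure_eq_cond_of_cond_eq_cond_compl [IsProbabilityMeasure μ] (hs : MeasurableSet s)
    (h : μ[t | s] = μ[t | sᶜ]) : μ t = μ[t | s] := by
  rw [← cond_add_cond_compl_eq hs μ, ← h, ← mul_add, measure_add_measure_compl hs, measure_univ,
    mul_one]

lemma measure_inter_eq_mul_of_cond_eq_cond_compl [IsProbabilityMeasure μ] (hs : MeasurableSet s)
    (h : μ[t | s] = μ[t | sᶜ]) : μ (s ∩ t) = μ s * μ t := by
  rw [← cond_mul_eq_inter hs, measure_eq_cond_of_cond_eq_cond_compl hs h, mul_comm]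

lemma measure_inter_compl_eq_mul [IsProbabilityMeasure μ] (ht : MeasurableSet t)
    (h : μ (s ∩ t) = μ s * μ t) : μ (s ∩ tᶜ) = μ s * μ tᶜ := by
  rw [prob_compl_eq_one_sub ht, ENNReal.mul_sub (fun _ _ => measure_ne_top μ s), mul_one, ← h,
    ← measure_inter_add_sdiff s ht, ENNReal.add_sub_cancel_left (measure_ne_top μ _),
    Set.sdiff_eq]

lemma cond_eq_of_measure_inter_eq_mul [IsFiniteMeasure μ] (ht : MeasurableSet t) (ht0 : μ t ≠ 0)
    (h : μ (s ∩ t) = μ s * μ t) : μ[s | t] = μ s := by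
  rw [cond_apply ht, Set.inter_comm, h, mul_left_comm,
    ENNReal.inv_mul_cancel ht0 (measure_ne_top μ t), mul_one]

lemma cond_eq_cond_of_cond_inter_eq_one_of_cond_compl_inter_eq_zero [IsFiniteMeasure μ]
    (hs : MeasurableSet s) (ht : MeasurableSet t)
    (h₁ : μ[w | s ∩ t] = 1) (h₀ : μ[w | sᶜ ∩ t] = 0) : μ[w | t] = μ[s | t] := by
  have hin : μ (s ∩ t ∩ w) = μ (s ∩ t) := by
    rw [← cond_mul_eq_inter (hs.inter ht), h₁, one_mul]
  have hout : μ (sᶜ ∩ t ∩ w) = 0 := by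
    rw [← cond_mul_eq_inter (hs.compl.inter ht), h₀, zero_mul]
  rw [cond_apply ht, cond_apply ht]
  congr 1
  calc μ (t ∩ w) = μ (t ∩ w ∩ s) + μ ((t ∩ w) \ s) := (measure_inter_add_sdiff _ hs).symm
    _ = μ (s ∩ t ∩ w) + μ (sᶜ ∩ t ∩ w) := by rw [Set.sdiff_eq]; congr 2 <;> ac_rfl
    _ = μ (t ∩ s) := by rw [hin, hout, add_zero, Set.inter_comm]

end

theorem monty_hall_cond_eq_E_general
    {Ω : Type*} [MeasurableSpace Ω] (μ : Measure Ω) [IsProbabilityMeasure μ]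
    (E C W : Set Ω) (hE : MeasurableSet E) (hC : MeasurableSet C)
    (p : ℝ≥0∞) (hp0 : 0 < p) (hp1 : p < 1)
    (hCE : μ[|E] C = p) (hCEc : μ[|Eᶜ] C = p)
    (h1 : μ[|E ∩ C] W = 0) (h2 : μ[|E ∩ Cᶜ] W = 1)
    (h3 : μ[|Eᶜ ∩ C] W = 1) (h4 : μ[|Eᶜ ∩ Cᶜ] W = 0) :
    μ[|C] W = μ Eᶜ ∧ μ[|Cᶜ] W = μ E := by
  have hcond : μ[C | E] = μ[C | Eᶜ] := hCE.trans hCEc.symm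
  have hμC : μ C = p := (measure_eq_cond_of_cond_eq_cond_compl hE hcond).trans hCE
  have hC0 : μ C ≠ 0 := hμC ▸ hp0.ne'
  have hCc0 : μ Cᶜ ≠ 0 := by
    rw [prob_compl_eq_one_sub hC, hμC]
    exact (tsub_pos_of_lt hp1).ne'
  have hEC : μ (E ∩ C) = μ E * μ C := measure_inter_eq_mul_of_cond_eq_cond_compl hE hcond
  have hEcC : μ (Eᶜ ∩ C) = μ Eᶜ * μ C :=
    measure_inter_eq_mul_of_cond_eq_cond_compl hE.compl (by rw [compl_compl, hcond])
  constructor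
  · rw [cond_eq_cond_of_cond_inter_eq_one_of_cond_compl_inter_eq_zero hE.compl hC h3
      (by rwa [compl_compl])]
    exact cond_eq_of_measure_inter_eq_mul hC hC0 hEcC
  · rw [cond_eq_cond_of_cond_inter_eq_one_of_cond_compl_inter_eq_zero hE hC.compl h2 h4]
    exact cond_eq_of_measure_inter_eq_mul hC.compl hCc0 (measure_inter_compl_eq_mul hC hEC)

theorem monty_hall_cond_eq_E
    {Ω : Type*} [MeasurableSpace Ω] (μ : Measure Ω) [IsProbabilityMeasure μ]
    (E C W : Set Ω) (hE : MeasurableSet E) (hC : MeasurableSet C) (hW : MeasurableSet W)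
    (n : ℕ) (hn : 3 ≤ n)
    (p : ℝ≥0∞) (hp0 : 0 < p) (hp1 : p < 1)
    (hPE : μ E = 1/(n : ℝ≥0∞))
    (hCE : μ[|E] C = p) (hCEc : μ[|Eᶜ] C = p)
    (h1 : μ[|E ∩ C] W = 0) (h2 : μ[|E ∩ Cᶜ] W = 1)
    (h3 : μ[|Eᶜ ∩ C] W = 1) (h4 : μ[|Eᶜ ∩ Cᶜ] W = 0) :
    μ[|C] W = μ Eᶜ ∧ μ[|Cᶜ] W = μ E :=
  monty_hall_cond_eq_E_general μ E C W hE hC p hp0 hp1 hCE hCEc h1 h2 h3 h4
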